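/- Let f be the Fibonacci sequence with f_0 = f_1 = 1. For each fixed k ∈ ℕ, define the sequence b^{(k)} by b^{(k)}_n = f_{n+1}²/(f_k f_{k+1}) for n ≥ k and 0 for n < k. Then F̂ b^{(k)} = e^{(k)}, the k-th standard unit sequence; i.e., (f_n/f_{n+1}) b^{(k)}_n − (f_{n+1}/f_n) b^{(k)}_{n−1} equals 1 if n = k and 0 otherwise. -/

import Mathlib

/-! For `n > k` both terms of `(F̂ b⁽ᵏ⁾)ₙ` equal `fₙ fₙ₊₁ / (fₖ fₖ₊₁)`, since
`(fₙ / fₙ₊₁) fₙ₊₁² = fₙ fₙ₊₁ = (fₙ₊₁ / fₙ) fₙ²`, so they cancel. At `n = k` only the first term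
survives, and it is `(fₖ / fₖ₊₁) fₖ₊₁² / (fₖ fₖ₊₁) = 1`; for `n < k` both terms vanish. -/

open Filter Topology

def fibo : ℕ → ℕ
  | 0 => 1
  | 1 => 1
  | n + 2 => fibo (n + 1) + fibo n

noncomputable def Fhat (x : ℕ → ℝ) : ℕ → ℝ
  | 0 => (fibo 0 : ℝ) / fibo 1 * x 0
  | k + 1 => (fibo (k + 1) : ℝ) / fibo (k + 2) * x (k + 1)
      - (fibo (k + 2) : ℝ) / fibo (k + 1) * x k

noncomputable def xseq (y : ℕ → ℝ) (k : ℕ) : ℝ :=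
  ∑ j ∈ Finset.range (k + 1), ((fibo (k + 1) : ℝ) ^ 2 / ((fibo j : ℝ) * fibo (j + 1))) * y j

noncomputable def bseq (k : ℕ) (n : ℕ) : ℝ :=
  if k ≤ n then (fibo (n + 1) : ℝ) ^ 2 / ((fibo k : ℝ) * fibo (k + 1)) else 0

lemma fibo_pos : ∀ n, 0 < fibo n
  | 0 => one_pos
  | 1 => one_pos
  | n + 2 => Nat.add_pos_left (fibo_pos (n + 1)) _

lemma fibo_cast_ne_zero (n : ℕ) : (fibo n : ℝ) ≠ 0 := by
  exact_mod_cast (fibo_pos n).ne'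

lemma Fhat_eq_of_pred_eq_zero (x : ℕ → ℝ) (n : ℕ) (hx : ∀ m, m + 1 = n → x m = 0) :
    Fhat x n = (fibo n : ℝ) / fibo (n + 1) * x n := by
  cases n with
  | zero => rfl
  | succ m => simp [Fhat, hx m rfl]

lemma bseq_of_lt {k n : ℕ} (h : n < k) : bseq k n = 0 :=
  if_neg (Nat.not_le.mpr h)

lemma bseq_of_le {k n : ℕ} (h : k ≤ n) :
    bseq k n = (fibo (n + 1) : ℝ) ^ 2 / ((fibo k : ℝ) * fibo (k + 1)) :=
  if_pos h

lemma Fhat_bseq_self (k : ℕ) : Fhat (bseq k) k = 1 := by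
  rw [Fhat_eq_of_pred_eq_zero _ _ fun m hm => bseq_of_lt (by omega), bseq_of_le le_rfl]
  field_simp
  exact div_self (mul_ne_zero (fibo_cast_ne_zero _) (fibo_cast_ne_zero _))

lemma Fhat_bseq_of_lt {k n : ℕ} (h : n < k) : Fhat (bseq k) n = 0 := by
  rw [Fhat_eq_of_pred_eq_zero _ _ fun m hm => bseq_of_lt (by omega), bseq_of_lt h, mul_zero]

lemma Fhat_bseq_of_gt {k n : ℕ} (h : k < n) : Fhat (bseq k) n = 0 := by
  obtain ⟨m, rfl⟩ : ∃ m, n = m + 1 := Nat.exists_eq_succ_of_ne_zero (by omega)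
  rw [Fhat, bseq_of_le h.le, bseq_of_le (by omega : k ≤ m)]
  field_simp [fibo_cast_ne_zero]
  ring

theorem Fhat_bseq (k n : ℕ) :
    Fhat (bseq k) n = if n = k then 1 else 0 := by
  rcases lt_trichotomy n k with h | rfl | h
  · rw [Fhat_bseq_of_lt h, if_neg h.ne]
  · rw [Fhat_bseq_self, if_pos rfl]
  · rw [Fhat_bseq_of_gt h, if_neg h.ne']
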